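/- arXiv:0710.2496 — 4 statements merged into one kernel-verified Lean document; each statement's English description precedes it below -/
import Mathlib

section
/- Let (X_1,Y_1), (X_2,Y_2), … be a stationary sequence of ℝ×ℝ-valued random variables with E|Y_1| < ∞. Then with probability one the sample path ((X_1,Y_1),(X_2,Y_2),…) is stable: for every t ∈ ℝ, the empirical quantities (1/n)∑_{i=1}^n 1{X_i ≤ t}, (1/n)∑_{i=1}^n 1{X_i = t}, (1/n)∑_{i=1}^n Y_i·1{X_i ≤ t}, and (1/n)∑_{i=1}^n Y_i·1{X_i = t} all converge almost surely (namely, to the conditional expectations E[1{X_1 ≤ t} | ℰ], E[1{X_1 = t} | ℰ], E[Y_1·1{X_1 ≤ t} | ℰ], and E[Y_1·1{X_1 = t} | ℰ], where ℰ is the invariant σ-algebra of the shift). -/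
/-
Under the shift, the Birkhoff averages of `s ↦ F (s 0)` are the empirical means of `F (X_i, Y_i)`,
so all four limits are instances of Birkhoff's pointwise ergodic theorem, proved here via
Garsia's maximal inequality. If `M_N = max (S_0, …, S_N)` are the running maxima of the Birkhoff
sums of `φ`, then `M_N ≤ φ + M_N ∘ T` on `{M_N > 0}`, and invariance of the measure gives
`∫_{M_N > 0} φ ≥ 0`. Applied on an invariant set `B` to `φ = f - E[f | ℰ] - ε`, whose integral
over `B` is `-ε μ(B)`, this forces the invariant set where the Birkhoff sums of `φ` are unbounded
above to be null, i.e. `limsup S_n f / n ≤ E[f | ℰ] + ε` almost surely.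
-/

open MeasureTheory Filter Set

noncomputable section

/-- The shift on the path space of an `ℝ×ℝ`-valued process. -/
def shiftSeq : (ℕ → ℝ × ℝ) → (ℕ → ℝ × ℝ) := fun s i => s (i + 1)

/-- The invariant σ-algebra `ℰ` of the shift: measurable sets `A` with
`shift⁻¹ A = A`. -/
def invSigma : MeasurableSpace (ℕ → ℝ × ℝ) where
  MeasurableSet' A := MeasurableSet A ∧ shiftSeq ⁻¹' A = A
  measurableSet_empty := ⟨MeasurableSet.empty, by simp⟩
  measurableSet_compl := fun A hA => ⟨hA.1.compl, by rw [Set.preimage_compl, hA.2]⟩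
  measurableSet_iUnion := fun f hf =>
    ⟨MeasurableSet.iUnion fun i => (hf i).1, by
      rw [Set.preimage_iUnion]; exact Set.iUnion_congr fun i => (hf i).2⟩

open Topology

section MaximalErgodic

variable {α : Type*} {T : α → α} {φ : α → ℝ}

def maxBirkhoffSum (T : α → α) (φ : α → ℝ) (N : ℕ) : α → ℝ :=
  (Finset.range (N + 1)).sup' Finset.nonempty_range_add_one fun k => birkhoffSum T φ k

lemma maxBirkhoffSum_apply (N : ℕ) (x : α) :
    maxBirkhoffSum T φ N x =
      (Finset.range (N + 1)).sup' Finset.nonempty_range_add_one fun k => birkhoffSum T φ k x :=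
  Finset.sup'_apply _ _ _

lemma birkhoffSum_le_maxBirkhoffSum {k N : ℕ} (hk : k ≤ N) (x : α) :
    birkhoffSum T φ k x ≤ maxBirkhoffSum T φ N x := by
  rw [maxBirkhoffSum_apply]
  exact Finset.le_sup' (fun k => birkhoffSum T φ k x) (Finset.mem_range_succ_iff.2 hk)

lemma maxBirkhoffSum_nonneg (N : ℕ) (x : α) : 0 ≤ maxBirkhoffSum T φ N x := by
  simpa using birkhoffSum_le_maxBirkhoffSum (T := T) (φ := φ) N.zero_le x

lemma maxBirkhoffSum_mono (x : α) : Monotone fun N => maxBirkhoffSum T φ N x := by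
  intro M N hMN
  dsimp only
  rw [maxBirkhoffSum_apply]
  exact Finset.sup'_le _ _ fun k hk =>
    birkhoffSum_le_maxBirkhoffSum ((Finset.mem_range_succ_iff.1 hk).trans hMN) x

lemma maxBirkhoffSum_le_add_comp {N : ℕ} {x : α} (hpos : 0 < maxBirkhoffSum T φ N x) :
    maxBirkhoffSum T φ N x ≤ φ x + maxBirkhoffSum T φ N (T x) := by
  obtain ⟨k, hk, hkx⟩ :=
    Finset.exists_mem_eq_sup' Finset.nonempty_range_add_one fun k => birkhoffSum T φ k x
  rw [maxBirkhoffSum_apply, hkx] at hpos ⊢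
  cases k with
  | zero => simp at hpos
  | succ j =>
    rw [birkhoffSum_succ']
    gcongr
    exact birkhoffSum_le_maxBirkhoffSum (by simp at hk; omega) _

lemma bddAbove_range_birkhoffSum_comp_iff (x : α) :
    BddAbove (range fun n => birkhoffSum T φ n (T x)) ↔
      BddAbove (range fun n => birkhoffSum T φ n x) := by
  simp only [bddAbove_def, forall_mem_range]
  constructor
  · rintro ⟨C, hC⟩
    refine ⟨max 0 (φ x + C), fun n => ?_⟩
    cases n with
    | zero => simp
    | succ n => exact le_max_of_le_right (by rw [birkhoffSum_succ']; linarith [hC n])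
  · rintro ⟨C, hC⟩
    refine ⟨C - φ x, fun n => ?_⟩
    have := hC (n + 1)
    rw [birkhoffSum_succ'] at this
    linarith

variable [MeasurableSpace α] {μ : Measure α}

lemma measurable_birkhoffSum (hT : Measurable T) (hφ : Measurable φ) (n : ℕ) :
    Measurable (birkhoffSum T φ n) :=
  Finset.measurable_sum _ fun k _ => hφ.comp (hT.iterate k)

lemma measurable_maxBirkhoffSum (hT : Measurable T) (hφ : Measurable φ) (N : ℕ) :
    Measurable (maxBirkhoffSum T φ N) :=
  Finset.measurable_sup' _ fun k _ => measurable_birkhoffSum hT hφ k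

lemma MeasureTheory.MeasurePreserving.integrable_birkhoffSum (hT : MeasurePreserving T μ μ)
    (hφ : Integrable φ μ) (n : ℕ) : Integrable (birkhoffSum T φ n) μ :=
  integrable_finsetSum _ fun k _ => (hT.iterate k).integrable_comp_of_integrable hφ

lemma MeasureTheory.MeasurePreserving.integrable_maxBirkhoffSum (hT : MeasurePreserving T μ μ)
    (hφ : Integrable φ μ) (N : ℕ) : Integrable (maxBirkhoffSum T φ N) μ :=
  Finset.sup'_induction (p := (Integrable · μ)) _ _ (fun _ hf _ hg => hf.sup hg) fun k _ =>
    hT.integrable_birkhoffSum hφ k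

theorem setIntegral_maxBirkhoffSum_pos_nonneg (hT : MeasurePreserving T μ μ) (hφm : Measurable φ)
    (hφ : Integrable φ μ) (N : ℕ) : 0 ≤ ∫ x in {x | 0 < maxBirkhoffSum T φ N x}, φ x ∂μ := by
  set M := maxBirkhoffSum T φ N
  set A := {x | 0 < M x}
  have hMm : Measurable M := measurable_maxBirkhoffSum hT.measurable hφm N
  have hA : MeasurableSet A := measurableSet_lt measurable_const hMm
  have hM : Integrable M μ := hT.integrable_maxBirkhoffSum hφ N
  have hMT : Integrable (M ∘ T) μ := hT.integrable_comp_of_integrable hM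
  have hMT_eq : ∫ x, M (T x) ∂μ = ∫ x, M x ∂μ := by
    rw [← integral_map hT.aemeasurable hMm.aestronglyMeasurable, hT.map_eq]
  calc (0 : ℝ) = ∫ x, M x ∂μ - ∫ x, M (T x) ∂μ := by rw [hMT_eq, sub_self]
    _ ≤ ∫ x in A, M x ∂μ - ∫ x in A, M (T x) ∂μ := by
      gcongr ?_ - ?_
      · exact (setIntegral_eq_integral_of_forall_compl_eq_zero fun x hx =>
          le_antisymm (not_lt.1 hx) (maxBirkhoffSum_nonneg N x)).ge
      · exact setIntegral_le_integral hMT (ae_of_all _ fun x => maxBirkhoffSum_nonneg N (T x))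
    _ = ∫ x in A, (M x - M (T x)) ∂μ := (integral_sub hM.integrableOn hMT.integrableOn).symm
    _ ≤ ∫ x in A, φ x ∂μ := setIntegral_mono_on (hM.sub hMT).integrableOn hφ.integrableOn hA
        fun x hx => by linarith [maxBirkhoffSum_le_add_comp (T := T) hx]

theorem setIntegral_exists_birkhoffSum_pos_nonneg (hT : MeasurePreserving T μ μ)
    (hφm : Measurable φ) (hφ : Integrable φ μ) :
    0 ≤ ∫ x in {x | ∃ n, 0 < birkhoffSum T φ n x}, φ x ∂μ := by
  have hunion : {x | ∃ n, 0 < birkhoffSum T φ n x} = ⋃ N, {x | 0 < maxBirkhoffSum T φ N x} := by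
    ext x
    simp only [mem_ofPred_eq, mem_iUnion]
    refine ⟨fun ⟨n, hn⟩ => ⟨n, hn.trans_le (birkhoffSum_le_maxBirkhoffSum le_rfl x)⟩,
      fun ⟨N, hN⟩ => ?_⟩
    obtain ⟨k, -, hk⟩ :=
      Finset.exists_mem_eq_sup' Finset.nonempty_range_add_one fun k => birkhoffSum T φ k x
    exact ⟨k, by rwa [maxBirkhoffSum_apply, hk] at hN⟩
  rw [hunion]
  refine ge_of_tendsto' (tendsto_setIntegral_of_monotone (fun N => ?_) (fun M N hMN x hx => ?_)
    hφ.integrableOn) (setIntegral_maxBirkhoffSum_pos_nonneg hT hφm hφ)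
  · exact measurableSet_lt measurable_const (measurable_maxBirkhoffSum hT.measurable hφm N)
  · exact hx.trans_le (maxBirkhoffSum_mono x hMN)

end MaximalErgodic

section Birkhoff

open MeasurableSpace

variable {α : Type*} [MeasurableSpace α] {μ : Measure α} {T : α → α} {φ f g : α → ℝ}

theorem ae_bddAbove_range_birkhoffSum (hT : MeasurePreserving T μ μ) (hφm : Measurable φ)
    (hφ : Integrable φ μ)
    (hneg : ∀ B, MeasurableSet B → T ⁻¹' B = B → 0 < μ B → ∫ x in B, φ x ∂μ < 0) :
    ∀ᵐ x ∂μ, BddAbove (range fun n => birkhoffSum T φ n x) := by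
  set B := {x | ¬BddAbove (range fun n => birkhoffSum T φ n x)}
  have hB : MeasurableSet B :=
    (measurableSet_bddAbove_range fun n => measurable_birkhoffSum hT.measurable hφm n).compl
  have hBT : T ⁻¹' B = B := by
    ext x
    simp only [B, mem_preimage, mem_ofPred_eq, bddAbove_range_birkhoffSum_comp_iff]
  have hB_sub : B ⊆ {x | ∃ n, 0 < birkhoffSum T φ n x} := fun x hx => by
    obtain ⟨_, ⟨n, rfl⟩, hn⟩ := not_bddAbove_iff.1 hx 0
    exact ⟨n, hn⟩
  have hB_nonneg : 0 ≤ ∫ x in B, φ x ∂μ := by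
    have hTB : MeasurePreserving T (μ.restrict B) (μ.restrict B) := by
      simpa only [hBT] using hT.restrict_preimage hB
    have := setIntegral_exists_birkhoffSum_pos_nonneg hTB hφm hφ.restrict
    rwa [Measure.restrict_restrict' hB, inter_eq_right.2 hB_sub] at this
  rw [ae_iff]
  by_contra hpos
  exact (hneg B hB hBT (pos_iff_ne_zero.2 hpos)).not_ge hB_nonneg

variable [IsFiniteMeasure μ]

theorem ae_eventually_birkhoffAverage_lt (hT : MeasurePreserving T μ μ) (hfm : Measurable f)
    (hf : Integrable f μ) (hgm : Measurable g) (hg : Integrable g μ) (hgT : g ∘ T = g)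
    (hfg : ∀ B, MeasurableSet B → T ⁻¹' B = B → ∫ x in B, g x ∂μ = ∫ x in B, f x ∂μ)
    {ε : ℝ} (hε : 0 < ε) :
    ∀ᵐ x ∂μ, ∀ᶠ n in atTop, birkhoffAverage ℝ T f n x < g x + ε := by
  set φ := f - g - fun _ => ε / 2
  have hφT : ∀ n x, birkhoffSum T φ n x = birkhoffSum T f n x - n * (g x + ε / 2) := by
    intro n x
    simp only [φ, birkhoffSum_sub, birkhoffSum_of_comp_eq hgT,
      birkhoffSum_of_comp_eq (rfl : (fun _ => ε / 2) ∘ T = _)]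
    simp only [Pi.smul_apply, nsmul_eq_mul]
    ring
  have hneg : ∀ B, MeasurableSet B → T ⁻¹' B = B → 0 < μ B → ∫ x in B, φ x ∂μ < 0 := by
    intro B hB hBT hpos
    have hBφ : ∫ x in B, φ x ∂μ = -(ε / 2 * μ.real B) := by
      rw [show ∫ x in B, φ x ∂μ = ∫ x in B, ((f x - g x) - ε / 2) ∂μ from rfl,
        integral_sub (f := fun x => f x - g x) (hf.sub hg).integrableOn
          (integrable_const _).integrableOn,
        integral_sub hf.integrableOn hg.integrableOn, hfg B hB hBT, setIntegral_const,
        smul_eq_mul]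
      ring
    rw [hBφ, neg_lt_zero]
    exact mul_pos (half_pos hε) (ENNReal.toReal_pos hpos.ne' (measure_ne_top μ B))
  filter_upwards [ae_bddAbove_range_birkhoffSum hT ((hfm.sub hgm).sub measurable_const)
    ((hf.sub hg).sub (integrable_const _)) hneg] with x ⟨C, hC⟩
  filter_upwards [eventually_gt_atTop 0, (tendsto_const_div_atTop_nhds_zero_nat C).eventually
    (gt_mem_nhds (half_pos hε))] with n hn hCn
  have hSf : birkhoffSum T f n x ≤ C + n * (g x + ε / 2) := by
    linarith [hφT n x, hC (mem_range_self n)]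
  have hn' : (0 : ℝ) < n := Nat.cast_pos.2 hn
  calc birkhoffAverage ℝ T f n x = birkhoffSum T f n x / n := by
        rw [birkhoffAverage, smul_eq_mul, inv_mul_eq_div]
    _ ≤ (C + n * (g x + ε / 2)) / n := by gcongr
    _ = C / n + (g x + ε / 2) := by field_simp
    _ < g x + ε := by linarith

theorem ae_forall_eventually_birkhoffAverage_lt (hT : MeasurePreserving T μ μ)
    (hfm : Measurable f) (hf : Integrable f μ) (hgm : Measurable g) (hg : Integrable g μ)
    (hgT : g ∘ T = g)
    (hfg : ∀ B, MeasurableSet B → T ⁻¹' B = B → ∫ x in B, g x ∂μ = ∫ x in B, f x ∂μ) :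
    ∀ᵐ x ∂μ, ∀ c, g x < c → ∀ᶠ n in atTop, birkhoffAverage ℝ T f n x < c := by
  have h := ae_all_iff.2 fun k : ℕ =>
    ae_eventually_birkhoffAverage_lt hT hfm hf hgm hg hgT hfg (Nat.one_div_pos_of_nat (n := k))
  filter_upwards [h] with x hx c hc
  obtain ⟨k, hk⟩ := exists_nat_one_div_lt (sub_pos.2 hc)
  exact (hx k).mono fun n hn => by linarith

theorem ae_tendsto_birkhoffAverage (hT : MeasurePreserving T μ μ)
    (hfm : Measurable f) (hf : Integrable f μ) (hgm : Measurable g) (hg : Integrable g μ)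
    (hgT : g ∘ T = g)
    (hfg : ∀ B, MeasurableSet B → T ⁻¹' B = B → ∫ x in B, g x ∂μ = ∫ x in B, f x ∂μ) :
    ∀ᵐ x ∂μ, Tendsto (birkhoffAverage ℝ T f · x) atTop (𝓝 (g x)) := by
  have hgT' : (-g) ∘ T = -g := funext fun x => congrArg Neg.neg (congrFun hgT x)
  have hlo := ae_forall_eventually_birkhoffAverage_lt hT hfm.neg hf.neg hgm.neg hg.neg hgT'
    fun B hB hBT => by simp only [Pi.neg_apply, integral_neg, hfg B hB hBT]
  filter_upwards [ae_forall_eventually_birkhoffAverage_lt hT hfm hf hgm hg hgT hfg, hlo]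
    with x hup hlo
  refine tendsto_order.2 ⟨fun c hc => ?_, hup⟩
  filter_upwards [hlo (-c) (by simpa using hc)] with n hn
  simpa only [birkhoffAverage_neg, Pi.neg_apply, neg_lt_neg_iff] using hn

theorem ae_tendsto_birkhoffAverage_condExp (hT : MeasurePreserving T μ μ) (hfm : Measurable f)
    (hf : Integrable f μ) :
    ∀ᵐ x ∂μ, Tendsto (birkhoffAverage ℝ T f · x) atTop
      (𝓝 (μ[f | invariants T] x)) := by
  have hg : Measurable[invariants T] (μ[f | invariants T]) :=
    stronglyMeasurable_condExp.measurable
  exact ae_tendsto_birkhoffAverage hT hfm hf (hg.mono (invariants_le T) le_rfl) integrable_condExp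
    (comp_eq_of_measurable_invariants hg)
    fun B hB hBT => setIntegral_condExp (invariants_le T) hf ⟨hB, hBT⟩

end Birkhoff

section StationaryProcess

lemma invSigma_eq_invariants : invSigma = MeasurableSpace.invariants shiftSeq := rfl

lemma measurable_shiftSeq : Measurable shiftSeq :=
  measurable_pi_lambda _ fun i => measurable_pi_apply (i + 1)

lemma shiftSeq_iterate_apply (i : ℕ) (s : ℕ → ℝ × ℝ) (j : ℕ) : shiftSeq^[i] s j = s (j + i) := by
  induction i generalizing s with
  | zero => rfl
  | succ i ih => rw [Function.iterate_succ_apply, ih]; rfl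

lemma birkhoffSum_shiftSeq (F : ℝ × ℝ → ℝ) (n : ℕ) (s : ℕ → ℝ × ℝ) :
    birkhoffSum shiftSeq (fun s => F (s 0)) n s = ∑ i ∈ Finset.range n, F (s i) := by
  simp only [birkhoffSum, shiftSeq_iterate_apply, zero_add]

variable {μ : Measure (ℕ → ℝ × ℝ)} [IsFiniteMeasure μ]

theorem ae_tendsto_empiricalMean (hstat : μ.map shiftSeq = μ) {F : ℝ × ℝ → ℝ}
    (hF : Measurable F) (hFi : Integrable (fun s => F (s 0)) μ) :
    ∀ᵐ s ∂μ, Tendsto (fun n => (∑ i ∈ Finset.range n, F (s i)) / n) atTop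
      (𝓝 (μ[fun s => F (s 0) | invSigma] s)) := by
  have hT : MeasurePreserving shiftSeq μ μ := ⟨measurable_shiftSeq, hstat⟩
  have hFm : Measurable fun s : ℕ → ℝ × ℝ => F (s 0) := hF.comp (measurable_pi_apply 0)
  rw [invSigma_eq_invariants]
  filter_upwards [ae_tendsto_birkhoffAverage_condExp hT hFm hFi] with s hs
  refine hs.congr fun n => ?_
  rw [birkhoffAverage, birkhoffSum_shiftSeq, smul_eq_mul, inv_mul_eq_div]

theorem ae_tendsto_empiricalMean_indicator (hstat : μ.map shiftSeq = μ) {S : Set ℝ}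
    (hS : MeasurableSet S) {c : ℝ × ℝ → ℝ} (hc : Measurable c)
    (hci : Integrable (fun s => c (s 0)) μ) :
    ∀ᵐ s ∂μ, Tendsto (fun n => (∑ i ∈ Finset.range n, S.indicator (fun _ => c (s i)) (s i).1) / n)
      atTop (𝓝 (μ[fun s => S.indicator (fun _ => c (s 0)) (s 0).1 | invSigma] s)) := by
  have hF : Measurable fun p : ℝ × ℝ => S.indicator (fun _ => c p) p.1 :=
    hc.indicator (measurable_fst hS)
  refine ae_tendsto_empiricalMean (F := fun p => S.indicator (fun _ => c p) p.1) hstat hF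
    (hci.mono ?_ (ae_of_all _ fun s => ?_))
  · exact (hF.comp (measurable_pi_apply 0)).aestronglyMeasurable
  · exact norm_indicator_le_norm_self (fun _ => c (s 0)) _

end StationaryProcess

/-- **Proposition 1 (first part).** Let `(X_1,Y_1), (X_2,Y_2), …` be a
stationary `ℝ×ℝ`-valued process (its law `μ` on path space is shift-invariant)
with `E|Y_1| < ∞`.  Then the sample path is stable with probability one: for
every `t ∈ ℝ`, the empirical quantities
`(1/n)∑_{i=1}^n 1{X_i ≤ t}`, `(1/n)∑_{i=1}^n 1{X_i = t}`,
`(1/n)∑_{i=1}^n Y_i·1{X_i ≤ t}` and `(1/n)∑_{i=1}^n Y_i·1{X_i = t}`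
converge almost surely, namely to the conditional expectations given the
invariant σ-algebra `ℰ` of the shift. -/
theorem stationary_sample_path_stable
    (μ : Measure (ℕ → ℝ × ℝ)) [IsProbabilityMeasure μ]
    (hstat : μ.map shiftSeq = μ)
    (hY : Integrable (fun s => (s 0).2) μ) :
    ∀ t : ℝ, ∀ᵐ s ∂μ,
      Tendsto
        (fun n => (∑ i ∈ Finset.range n, (Iic t).indicator (fun _ => (1 : ℝ)) ((s i).1)) / n)
        atTop
        (nhds ((μ[(fun s' => (Iic t).indicator (fun _ => (1 : ℝ)) ((s' 0).1)) | invSigma]) s)) ∧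
      Tendsto
        (fun n => (∑ i ∈ Finset.range n, ({t} : Set ℝ).indicator (fun _ => (1 : ℝ)) ((s i).1)) / n)
        atTop
        (nhds ((μ[(fun s' => ({t} : Set ℝ).indicator (fun _ => (1 : ℝ)) ((s' 0).1)) | invSigma]) s)) ∧
      Tendsto
        (fun n => (∑ i ∈ Finset.range n, (Iic t).indicator (fun _ => (s i).2) ((s i).1)) / n)
        atTop
        (nhds ((μ[(fun s' => (Iic t).indicator (fun _ => (s' 0).2) ((s' 0).1)) | invSigma]) s)) ∧
      Tendsto
        (fun n => (∑ i ∈ Finset.range n, ({t} : Set ℝ).indicator (fun _ => (s i).2) ((s i).1)) / n)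
        atTop
        (nhds ((μ[(fun s' => ({t} : Set ℝ).indicator (fun _ => (s' 0).2) ((s' 0).1)) | invSigma]) s)) := by
  intro t
  filter_upwards [
    ae_tendsto_empiricalMean_indicator hstat measurableSet_Iic measurable_const
      (integrable_const 1),
    ae_tendsto_empiricalMean_indicator hstat (measurableSet_singleton t) measurable_const
      (integrable_const 1),
    ae_tendsto_empiricalMean_indicator hstat measurableSet_Iic measurable_snd hY,
    ae_tendsto_empiricalMean_indicator hstat (measurableSet_singleton t) measurable_snd hY]
    with s h1 h2 h3 h4
  exact ⟨h1, h2, h3, h4⟩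
end
end

section
/- Let μ be a Borel probability measure on ℝ, m : ℝ → ℝ Borel measurable with ∫|m| dμ < ∞, and let (x,y) ∈ Ω(μ,m) with y_i ∈ {0,1} for all i. Then sup_{A ∈ 𝒜} |ν̂_n(A) − ν(A)| → 0 as n → ∞, where 𝒜 is the collection of all intervals of the form (a,b] and (−∞,b] with a, b ∈ ℝ. -/
open MeasureTheory Filter Set

noncomputable section

/-- Empirical distribution of the first `n` terms of `x`. -/
def muHat (x : ℕ → ℝ) (n : ℕ) (A : Set ℝ) : ℝ :=
  (∑ i ∈ Finset.range n, A.indicator (fun _ => (1 : ℝ)) (x i)) / n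

/-- Joint sample average `ν̂_n(A) = (1/n) ∑_{i=1}^n y_i · 1{x_i ∈ A}`. -/
def nuHat (x y : ℕ → ℝ) (n : ℕ) (A : Set ℝ) : ℝ :=
  (∑ i ∈ Finset.range n, A.indicator (fun _ => y i) (x i)) / n

/-- The signed measure `ν(A) = ∫_A m dμ`. -/
def nuM (μ : Measure ℝ) (m : ℝ → ℝ) (A : Set ℝ) : ℝ := ∫ t in A, m t ∂μ

/-- `(x,y) ∈ Ω(μ,m)`: `x` has limiting distribution `μ` and `(x,y)` has
limiting regression `m`. -/
def memOmega (μ : Measure ℝ) (m : ℝ → ℝ) (x y : ℕ → ℝ) : Prop :=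
  (∀ t : ℝ, Tendsto (fun n => muHat x n (Iic t)) atTop (nhds (μ (Iic t)).toReal)) ∧
  (∀ t : ℝ, Tendsto (fun n => muHat x n {t}) atTop (nhds (μ {t}).toReal)) ∧
  (∀ t : ℝ, Tendsto (fun n => nuHat x y n (Iic t)) atTop (nhds (nuM μ m (Iic t)))) ∧
  (∀ t : ℝ, Tendsto (fun n => nuHat x y n {t}) atTop (nhds (nuM μ m {t})))

/-- `λ`, the uniform distribution on `[0,1]`. -/
def unifMeasure : Measure ℝ := volume.restrict (Icc 0 1)

/-- The class `𝒜` of all intervals of the form `(a,b]` and `(−∞,b]`. -/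
def intervalClass : Set (Set ℝ) :=
  { A | (∃ a b : ℝ, A = Ioc a b) ∨ (∃ b : ℝ, A = Iic b) }

/-! Since `0 ≤ yᵢ ≤ 1`, the empirical set function `ν̂ₙ` is monotone and its increments are
dominated by those of `μ̂ₙ`: `ν̂ₙ(S) - ν̂ₙ(L) ≤ μ̂ₙ(U) - μ̂ₙ(L)` whenever `L ⊆ S ⊆ U`. Passing to
the limit, `|ν̂ₙ(S) - ν(S)|` is bounded by the errors of `ν̂ₙ` at `L` and of `μ̂ₙ` at `L` and `U`,
plus `μ(U) - μ(L)`. The `j/k`-quantiles of `μ` give finitely many such brackets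
`L ⊆ (-∞, t] ⊆ U` of `μ`-mass at most `1/k`, one for every `t`, which yields uniform
convergence on half-lines; an interval `(a, b]` is the difference of two half-lines. -/

open ProbabilityTheory Topology

lemma tendsto_abs_sub_zero {α : Type*} {l : Filter α} {f : α → ℝ} {a : ℝ}
    (h : Tendsto f l (𝓝 a)) : Tendsto (fun n => |f n - a|) l (𝓝 0) := by
  simpa only [Real.norm_eq_abs] using tendsto_iff_norm_sub_tendsto_zero.1 h

section Empirical

variable {x y : ℕ → ℝ} {n : ℕ} {A B L S U : Set ℝ}

lemma nuHat_sdiff (h : A ⊆ B) : nuHat x y n (B \ A) = nuHat x y n B - nuHat x y n A := by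
  simp only [nuHat, indicator_sdiff h, Pi.sub_apply, Finset.sum_sub_distrib, sub_div]

lemma muHat_sdiff (h : A ⊆ B) : muHat x n (B \ A) = muHat x n B - muHat x n A :=
  nuHat_sdiff h

lemma nuHat_mono (hy : ∀ i, 0 ≤ y i) (h : A ⊆ B) : nuHat x y n A ≤ nuHat x y n B :=
  div_le_div_of_nonneg_right
    (Finset.sum_le_sum fun i _ => indicator_le_indicator_apply_of_subset h (hy i))
    n.cast_nonneg

lemma muHat_mono (h : A ⊆ B) : muHat x n A ≤ muHat x n B :=
  nuHat_mono (fun _ => zero_le_one) h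

lemma nuHat_le_muHat (hy : ∀ i, y i ≤ 1) : nuHat x y n A ≤ muHat x n A :=
  div_le_div_of_nonneg_right (Finset.sum_le_sum fun i _ => indicator_le_indicator (hy i))
    n.cast_nonneg

lemma nuHat_le_nuHat_add_muHat_sub (hy : ∀ i, y i ≤ 1) (hLS : L ⊆ S) (hSU : S ⊆ U) :
    nuHat x y n S ≤ nuHat x y n L + (muHat x n U - muHat x n L) := by
  calc nuHat x y n S = nuHat x y n L + nuHat x y n (S \ L) := by rw [nuHat_sdiff hLS]; ring
    _ ≤ nuHat x y n L + muHat x n (U \ L) :=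
      add_le_add_right ((nuHat_le_muHat hy).trans (muHat_mono (sdiff_subset_sdiff_left hSU))) _
    _ = nuHat x y n L + (muHat x n U - muHat x n L) := by rw [muHat_sdiff (hLS.trans hSU)]

lemma tendsto_muHat_univ : Tendsto (fun n => muHat x n univ) atTop (𝓝 1) :=
  tendsto_const_nhds.congr' <| (eventually_ne_atTop 0).mono fun n hn => by
    simp [muHat, hn]

lemma abs_nuHat_sub_le_of_bracket (hy0 : ∀ i, 0 ≤ y i) (hy1 : ∀ i, y i ≤ 1)
    (hLS : L ⊆ S) (hSU : S ⊆ U) {a b cL cU : ℝ}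
    (hS : Tendsto (fun n => nuHat x y n S) atTop (𝓝 a))
    (hL : Tendsto (fun n => nuHat x y n L) atTop (𝓝 b))
    (hμL : Tendsto (fun n => muHat x n L) atTop (𝓝 cL))
    (hμU : Tendsto (fun n => muHat x n U) atTop (𝓝 cU)) (n : ℕ) :
    |nuHat x y n S - a| ≤
      |nuHat x y n L - b| + |muHat x n L - cL| + |muHat x n U - cU| + (cU - cL) := by
  have hlow : ∀ n, nuHat x y n L ≤ nuHat x y n S := fun n => nuHat_mono hy0 hLS
  have hup : ∀ n, nuHat x y n S ≤ nuHat x y n L + (muHat x n U - muHat x n L) :=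
    fun n => nuHat_le_nuHat_add_muHat_sub hy1 hLS hSU
  have hba : b ≤ a := le_of_tendsto_of_tendsto' hL hS hlow
  have hab : a ≤ b + (cU - cL) := le_of_tendsto_of_tendsto' hS (hL.add (hμU.sub hμL)) hup
  rw [abs_sub_le_iff]
  constructor <;>
    linarith [hlow n, hup n, le_abs_self (nuHat x y n L - b), neg_abs_le (nuHat x y n L - b),
      le_abs_self (muHat x n L - cL), neg_abs_le (muHat x n L - cL),
      le_abs_self (muHat x n U - cU), neg_abs_le (muHat x n U - cU)]

end Empirical

section Quantile

variable {μ : Measure ℝ} {c t : ℝ}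

/-- A junk value unless `0 < c` and `c ≤ cdf μ t` for some `t`. -/
def cdfQuantile (μ : Measure ℝ) (c : ℝ) : ℝ := sInf {t | c ≤ cdf μ t}

lemma bddBelow_setOf_le_cdf (hc : 0 < c) : BddBelow {t | c ≤ cdf μ t} := by
  obtain ⟨t₀, ht₀⟩ :=
    eventually_atBot.mp <| (tendsto_cdf_atBot μ).eventually (eventually_lt_nhds hc)
  exact ⟨t₀, fun s hs => not_lt.mp fun hlt => (ht₀ s hlt.le).not_ge hs⟩

lemma cdfQuantile_le (hc : 0 < c) (ht : c ≤ cdf μ t) : cdfQuantile μ c ≤ t :=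
  csInf_le (bddBelow_setOf_le_cdf hc) ht

lemma le_cdf_cdfQuantile (ht : c ≤ cdf μ t) : c ≤ cdf μ (cdfQuantile μ c) := by
  have hgt : ∀ s ∈ Ioi (cdfQuantile μ c), c ≤ cdf μ s := fun s hs => by
    obtain ⟨u, hu, hus⟩ := exists_lt_of_csInf_lt ⟨t, ht⟩ hs
    exact hu.trans (monotone_cdf μ hus.le)
  exact ge_of_tendsto ((cdf μ).right_continuous _ |>.mono_left
    (nhdsWithin_mono _ Ioi_subset_Ici_self)) (eventually_nhdsWithin_of_forall hgt)

lemma lt_cdfQuantile (hc : c < 1) (ht : cdf μ t < c) : t < cdfQuantile μ c := by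
  obtain ⟨s, hs⟩ := ((tendsto_cdf_atTop μ).eventually (eventually_gt_nhds hc)).exists
  by_contra! hle
  exact ht.not_ge ((le_cdf_cdfQuantile hs.le).trans (monotone_cdf μ hle))

lemma measureReal_Iio_cdfQuantile_le [IsProbabilityMeasure μ] (hc : 0 < c) :
    μ.real (Iio (cdfQuantile μ c)) ≤ c := by
  have hlt : ∀ s ∈ Iio (cdfQuantile μ c), cdf μ s ≤ c := fun s hs =>
    le_of_not_ge fun h => hs.not_ge (cdfQuantile_le hc h)
  have hleft : Function.leftLim (cdf μ) (cdfQuantile μ c) ≤ c :=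
    le_of_tendsto ((monotone_cdf μ).tendsto_leftLim _) (eventually_nhdsWithin_of_forall hlt)
  have hIio := (cdf μ).measure_Iio (tendsto_cdf_atBot μ) (cdfQuantile μ c)
  rw [measure_cdf] at hIio
  rw [measureReal_def, hIio, ENNReal.toReal_ofReal']
  exact max_le (by linarith) hc.le

end Quantile

section Brackets

variable (μ : Measure ℝ) (k j : ℕ)

def lowerBracket : Set ℝ := if j = 0 then ∅ else Iic (cdfQuantile μ (j / k))

def upperBracket : Set ℝ := if k ≤ j + 1 then univ else Iio (cdfQuantile μ ((j + 1) / k))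

variable {μ k}

lemma lowerBracket_subset_Iic (hk : 0 < k) (t : ℝ) :
    lowerBracket μ k ⌊k * cdf μ t⌋₊ ⊆ Iic t := by
  unfold lowerBracket
  split_ifs with hj
  · exact empty_subset _
  · refine Iic_subset_Iic.2 (cdfQuantile_le (by positivity) ?_)
    rw [div_le_iff₀' (by positivity)]
    exact Nat.floor_le (by have := cdf_nonneg μ t; positivity)

lemma Iic_subset_upperBracket (hk : 0 < k) (t : ℝ) :
    Iic t ⊆ upperBracket μ k ⌊k * cdf μ t⌋₊ := by
  unfold upperBracket
  split_ifs with hj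
  · exact subset_univ _
  · have hk' : (0 : ℝ) < k := by positivity
    refine Iic_subset_Iio.2 (lt_cdfQuantile ?_ ?_)
    · rw [div_lt_one hk']
      exact_mod_cast not_le.mp hj
    · rw [lt_div_iff₀' hk']
      exact_mod_cast Nat.lt_floor_add_one _

lemma measureReal_upperBracket_sub_lowerBracket_le [IsProbabilityMeasure μ] (hk : 0 < k)
    (t : ℝ) :
    μ.real (upperBracket μ k ⌊k * cdf μ t⌋₊) - μ.real (lowerBracket μ k ⌊k * cdf μ t⌋₊) ≤
      1 / k := by
  set j := ⌊k * cdf μ t⌋₊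
  have hk' : (0 : ℝ) < k := by positivity
  have hU : μ.real (upperBracket μ k j) ≤ (j + 1) / k := by
    unfold upperBracket
    split_ifs with hjk
    · rw [probReal_univ, le_div_iff₀ hk', one_mul]
      exact_mod_cast hjk
    · exact measureReal_Iio_cdfQuantile_le (by positivity)
  have hL : (j : ℝ) / k ≤ μ.real (lowerBracket μ k j) := by
    unfold lowerBracket
    split_ifs with hj0
    · simp [hj0]
    · rw [← cdf_eq_real]
      refine le_cdf_cdfQuantile (t := t) ?_
      rw [div_le_iff₀' hk']
      exact Nat.floor_le (by have := cdf_nonneg μ t; positivity)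
  calc _ ≤ ((j : ℝ) + 1) / k - j / k := by linarith
    _ = 1 / k := by ring

variable {x y : ℕ → ℝ}

lemma tendsto_muHat_lowerBracket
    (hF : ∀ t, Tendsto (fun n => muHat x n (Iic t)) atTop (𝓝 (μ.real (Iic t)))) :
    Tendsto (fun n => muHat x n (lowerBracket μ k j)) atTop
      (𝓝 (μ.real (lowerBracket μ k j))) := by
  unfold lowerBracket
  split_ifs
  · simp [muHat]
  · exact hF _

lemma tendsto_muHat_upperBracket [IsProbabilityMeasure μ]
    (hF : ∀ t, Tendsto (fun n => muHat x n (Iic t)) atTop (𝓝 (μ.real (Iic t))))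
    (hFs : ∀ t, Tendsto (fun n => muHat x n {t}) atTop (𝓝 (μ.real {t}))) :
    Tendsto (fun n => muHat x n (upperBracket μ k j)) atTop
      (𝓝 (μ.real (upperBracket μ k j))) := by
  unfold upperBracket
  split_ifs
  · rw [probReal_univ]
    exact tendsto_muHat_univ
  · rw [← Iic_sdiff_right, measureReal_sdiff (singleton_subset_iff.2 self_mem_Iic)
      (measurableSet_singleton _)]
    simp_rw [muHat_sdiff (singleton_subset_iff.2 self_mem_Iic)]
    exact (hF _).sub (hFs _)

lemma exists_tendsto_nuHat_lowerBracket {G : ℝ → ℝ}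
    (hG : ∀ t, Tendsto (fun n => nuHat x y n (Iic t)) atTop (𝓝 (G t))) :
    ∃ b, Tendsto (fun n => nuHat x y n (lowerBracket μ k j)) atTop (𝓝 b) := by
  unfold lowerBracket
  split_ifs
  · exact ⟨0, by simp [nuHat]⟩
  · exact ⟨_, hG _⟩

end Brackets

theorem tendstoUniformly_nuHat_Iic {μ : Measure ℝ} [IsProbabilityMeasure μ] {x y : ℕ → ℝ}
    {G : ℝ → ℝ} (hy0 : ∀ i, 0 ≤ y i) (hy1 : ∀ i, y i ≤ 1)
    (hF : ∀ t, Tendsto (fun n => muHat x n (Iic t)) atTop (𝓝 (μ.real (Iic t))))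
    (hFs : ∀ t, Tendsto (fun n => muHat x n {t}) atTop (𝓝 (μ.real {t})))
    (hG : ∀ t, Tendsto (fun n => nuHat x y n (Iic t)) atTop (𝓝 (G t))) :
    TendstoUniformly (fun n t => nuHat x y n (Iic t)) G atTop := by
  rw [Metric.tendstoUniformly_iff]
  intro ε hε
  obtain ⟨k, hk⟩ := exists_nat_gt (2 / ε)
  have hk0 : 0 < k := by exact_mod_cast (div_pos two_pos hε).trans hk
  have hkε : 1 / (k : ℝ) < ε / 2 := by
    rw [div_lt_iff₀ (by positivity)]
    rw [div_lt_iff₀ hε] at hk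
    linarith
  choose b hb using fun j => exists_tendsto_nuHat_lowerBracket (μ := μ) (k := k) j hG
  have hsmall : ∀ᶠ n in atTop, ∀ j ∈ Finset.range (k + 1),
      |nuHat x y n (lowerBracket μ k j) - b j| +
        |muHat x n (lowerBracket μ k j) - μ.real (lowerBracket μ k j)| +
        |muHat x n (upperBracket μ k j) - μ.real (upperBracket μ k j)| < ε / 2 := by
    refine (Filter.eventually_all_finset _).2 fun j _ => ?_
    have h := ((tendsto_abs_sub_zero (hb j)).add
      (tendsto_abs_sub_zero (tendsto_muHat_lowerBracket (k := k) j hF))).add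
      (tendsto_abs_sub_zero (tendsto_muHat_upperBracket (k := k) j hF hFs))
    exact h.eventually (gt_mem_nhds (by simpa using half_pos hε))
  filter_upwards [hsmall] with n hn t
  have hj : ⌊k * cdf μ t⌋₊ ∈ Finset.range (k + 1) := by
    refine Finset.mem_range_succ_iff.2 (Nat.floor_le_of_le ?_)
    exact mul_le_of_le_one_right (Nat.cast_nonneg k) (cdf_le_one μ t)
  rw [dist_comm, Real.dist_eq]
  calc _ ≤ _ := abs_nuHat_sub_le_of_bracket hy0 hy1 (lowerBracket_subset_Iic hk0 t)
        (Iic_subset_upperBracket hk0 t) (hG t) (hb _) (tendsto_muHat_lowerBracket _ hF)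
        (tendsto_muHat_upperBracket _ hF hFs) n
    _ < ε / 2 + 1 / k :=
      add_lt_add_of_lt_of_le (hn _ hj) (measureReal_upperBracket_sub_lowerBracket_le hk0 t)
    _ < ε := by linarith

lemma nuM_sdiff {μ : Measure ℝ} {m : ℝ → ℝ} (hm : Integrable m μ) {A B : Set ℝ}
    (hA : MeasurableSet A) (h : A ⊆ B) : nuM μ m (B \ A) = nuM μ m B - nuM μ m A :=
  setIntegral_sdiff hA hm.integrableOn h

lemma abs_nuHat_sub_nuM_le_of_mem_intervalClass {μ : Measure ℝ} {m : ℝ → ℝ}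
    (hm : Integrable m μ) {x y : ℕ → ℝ} {n : ℕ} {δ : ℝ}
    (hδ : ∀ t, |nuHat x y n (Iic t) - nuM μ m (Iic t)| ≤ δ) {A : Set ℝ}
    (hA : A ∈ intervalClass) : |nuHat x y n A - nuM μ m A| ≤ 2 * δ := by
  have hδ0 : 0 ≤ δ := (abs_nonneg _).trans (hδ 0)
  rcases hA with ⟨a, b, rfl⟩ | ⟨b, rfl⟩
  · rcases le_total a b with hab | hba
    · have hIoc : Ioc a b = Iic b \ Iic a := by ext; simp [and_comm]
      rw [hIoc, nuHat_sdiff (Iic_subset_Iic.2 hab), nuM_sdiff hm measurableSet_Iic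
        (Iic_subset_Iic.2 hab)]
      calc _ = |(nuHat x y n (Iic b) - nuM μ m (Iic b)) -
              (nuHat x y n (Iic a) - nuM μ m (Iic a))| := by congr 1; ring
        _ ≤ _ := abs_sub _ _
        _ ≤ 2 * δ := by linarith [hδ a, hδ b]
    · simp [Ioc_eq_empty_of_le hba, nuHat, nuM, hδ0]
  · linarith [hδ b]

lemma tendsto_sSup_abs_nuHat_sub_nuM {μ : Measure ℝ} {m : ℝ → ℝ} (hm : Integrable m μ)
    {x y : ℕ → ℝ}
    (h : TendstoUniformly (fun n t => nuHat x y n (Iic t)) (fun t => nuM μ m (Iic t)) atTop) :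
    Tendsto (fun n => sSup ((fun A => |nuHat x y n A - nuM μ m A|) '' intervalClass))
      atTop (𝓝 0) := by
  rw [Metric.tendsto_nhds]
  intro ε hε
  filter_upwards [Metric.tendstoUniformly_iff.1 h (ε / 3) (by positivity)] with n hn
  have hδ : ∀ t, |nuHat x y n (Iic t) - nuM μ m (Iic t)| ≤ ε / 3 := fun t => by
    simpa [Real.dist_eq, abs_sub_comm] using (hn t).le
  have hle : sSup ((fun A => |nuHat x y n A - nuM μ m A|) '' intervalClass) ≤ 2 * (ε / 3) :=
    Real.sSup_le (forall_mem_image.2 fun A hA =>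
      abs_nuHat_sub_nuM_le_of_mem_intervalClass hm hδ hA) (by positivity)
  have hge : 0 ≤ sSup ((fun A => |nuHat x y n A - nuM μ m A|) '' intervalClass) :=
    Real.sSup_nonneg (forall_mem_image.2 fun _ _ => abs_nonneg _)
  rw [Real.dist_eq, sub_zero, abs_of_nonneg hge]
  linarith

theorem glivenko_cantelli_regression_individual_general
    (μ : Measure ℝ) [IsProbabilityMeasure μ]
    (m : ℝ → ℝ) (hmInt : Integrable m μ)
    (x y : ℕ → ℝ) (hxy : memOmega μ m x y) (hy : ∀ i, y i = 0 ∨ y i = 1) :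
    Tendsto (fun n => sSup ((fun A => |nuHat x y n A - nuM μ m A|) '' intervalClass))
      atTop (nhds 0) := by
  obtain ⟨hF, hFs, hG, -⟩ := hxy
  have hy0 : ∀ i, 0 ≤ y i := fun i => by rcases hy i with h | h <;> simp [h]
  have hy1 : ∀ i, y i ≤ 1 := fun i => by rcases hy i with h | h <;> simp [h]
  exact tendsto_sSup_abs_nuHat_sub_nuM hmInt (tendstoUniformly_nuHat_Iic hy0 hy1 hF hFs hG)

/-- **Glivenko–Cantelli for the joint sample averages.** Let `μ` be a Borel
probability measure on `ℝ`, `m : ℝ → ℝ` Borel measurable with `∫|m| dμ < ∞`,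
and `(x,y) ∈ Ω(μ,m)` with `y_i ∈ {0,1}`.  Then
`sup_{A ∈ 𝒜} |ν̂_n(A) − ν(A)| → 0` as `n → ∞`. -/
theorem glivenko_cantelli_regression_individual
    (μ : Measure ℝ) [IsProbabilityMeasure μ]
    (m : ℝ → ℝ) (hmMeas : Measurable m) (hmInt : Integrable m μ)
    (x y : ℕ → ℝ) (hxy : memOmega μ m x y) (hy : ∀ i, y i = 0 ∨ y i = 1) :
    Tendsto (fun n => sSup ((fun A => |nuHat x y n A - nuM μ m A|) '' intervalClass))
      atTop (nhds 0) :=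
  glivenko_cantelli_regression_individual_general μ m hmInt x y hxy hy
end
end

section
/- Let μ be a Borel probability measure on ℝ, let f : ℝ → ℝ have finite total variation V(f:−i,i) on (−i,i] and be μ-integrable, let k ≥ 1, and suppose every dyadic cell A ∈ π_k with A ⊆ (−i,i] satisfies μ(A) > 0. Define the conditional averaging (f ∘ π_k)(t) = (1/μ(π_k[t])) ∫_{π_k[t]} f dμ. Then V(f ∘ π_k : −i, i) ≤ 3·V(f : −i, i). -/
open MeasureTheory Filter Set

noncomputable section

/-- The set of sums `∑_{i=1}^n |h(t_i) − h(t_{i−1})|` over finite sequences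
`a < t_0 < t_1 < ⋯ < t_n = b`. -/
def vSums (h : ℝ → ℝ) (a b : ℝ) : Set ℝ :=
  { s | ∃ (n : ℕ) (t : ℕ → ℝ), (∀ i < n, t i < t (i + 1)) ∧ a < t 0 ∧ t n = b ∧
        s = ∑ i ∈ Finset.range n, |h (t (i + 1)) - h (t i)| }

/-- Total variation `V(h : a, b)` of `h` on `(a, b]`. -/
def totalVar (h : ℝ → ℝ) (a b : ℝ) : ℝ := sSup (vSums h a b)

/-- The dyadic cell `A_{k,j} = ((j−1)·2^{−k}, j·2^{−k}]` of the partition `π_k`. -/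
def dCell (k : ℕ) (j : ℤ) : Set ℝ := Ioc (((j : ℝ) - 1) / 2 ^ k) ((j : ℝ) / 2 ^ k)

/-- For `k ≥ 1`, the cell `π_k[t]` of the dyadic partition `π_k` containing `t`. -/
def dyadCell (k : ℕ) (t : ℝ) : Set ℝ :=
  Ioc (((⌈t * 2 ^ k⌉ : ℝ) - 1) / 2 ^ k) ((⌈t * 2 ^ k⌉ : ℝ) / 2 ^ k)

/-- The conditional averaging `(f ∘ π_k)(t) = (1/μ(π_k[t])) ∫_{π_k[t]} f dμ`. -/
def condAvg (μ : Measure ℝ) (f : ℝ → ℝ) (k : ℕ) (t : ℝ) : ℝ :=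
  (∫ z in dyadCell k t, f z ∂μ) / (μ (dyadCell k t)).toReal

/-!
On a cell `C` of `π_k` with `μ C > 0` the average of `f` lies between two values of `f` on `C`, so
it is within `V(f : C)` of `f (r C)`, where `r C` is the right endpoint of `C`. Along a monotone
sequence of points, a jump of `f ∘ π_k` from a cell `C` to a cell `C' > C` is therefore at most
`V(f : C) + |f (r C') - f (r C)| + V(f : C')`. The middle terms add up to at most `V(f)` because the
right endpoints are monotone; the cells left are pairwise distinct and ordered, and so are the cells
entered, so the variations on each family also add up to at most `V(f)`.

The argument is run with Mathlib's `eVariationOn f (Ioc a b)`, a supremum over monotone rather than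
strictly increasing sequences, not necessarily ending at `b`; it is bounded by `totalVar f a b` as
soon as `vSums f a b` is bounded above.
-/

lemma totalVar_nonneg (h : ℝ → ℝ) (a b : ℝ) : 0 ≤ totalVar h a b :=
  Real.sSup_nonneg fun _ ⟨_, _, _, _, _, hs⟩ => hs ▸ Finset.sum_nonneg fun _ _ => abs_nonneg _

lemma ofReal_le_eVariationOn_of_mem_vSums {h : ℝ → ℝ} {a b s : ℝ} (hs : s ∈ vSums h a b) :
    ENNReal.ofReal s ≤ eVariationOn h (Ioc a b) := by
  obtain ⟨n, t, ht, ha, hb, rfl⟩ := hs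
  have hmono : MonotoneOn t (Iic n) := (strictMonoOn_Iic_of_lt_succ ht).monotoneOn
  simp_rw [ENNReal.ofReal_sum_of_nonneg fun _ _ => abs_nonneg _, ← Real.dist_eq, ← edist_dist]
  refine eVariationOn.sum_le_of_monotoneOn_Iic hmono fun m hm => ⟨?_, hb ▸ hmono hm self_mem_Iic hm⟩
  exact ha.trans_le (hmono (Nat.zero_le n) hm (Nat.zero_le m))

lemma sum_abs_le_totalVar {h : ℝ → ℝ} {a b : ℝ} (hbdd : BddAbove (vSums h a b)) {n : ℕ}
    {t : ℕ → ℝ} (ht : StrictMonoOn t (Iic n)) (ha : a < t 0) (hb : t n ≤ b) :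
    ∑ i ∈ Finset.range n, |h (t (i + 1)) - h (t i)| ≤ totalVar h a b := by
  have hstep : ∀ i < n, t i < t (i + 1) := fun i hi => ht hi.le (Nat.succ_le_of_lt hi) (by omega)
  rcases hb.eq_or_lt with hb_eq | hb_lt
  · exact le_csSup hbdd ⟨n, t, hstep, ha, hb_eq, rfl⟩
  set t' : ℕ → ℝ := fun i => if i ≤ n then t i else b
  have hmem : ∑ i ∈ Finset.range (n + 1), |h (t' (i + 1)) - h (t' i)| ∈ vSums h a b := by
    refine ⟨n + 1, t', fun i hi => ?_, by simpa [t'] using ha, by simp [t'], rfl⟩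
    rcases Nat.lt_or_ge i n with hi' | hi'
    · simpa [t', hi'.le, Nat.succ_le_of_lt hi'] using hstep i hi'
    · simpa [t', show i = n by omega] using hb_lt
  calc ∑ i ∈ Finset.range n, |h (t (i + 1)) - h (t i)|
      = ∑ i ∈ Finset.range n, |h (t' (i + 1)) - h (t' i)| :=
        Finset.sum_congr rfl fun i hi => by
          simp [t', (Finset.mem_range.1 hi).le, Nat.succ_le_of_lt (Finset.mem_range.1 hi)]
    _ ≤ ∑ i ∈ Finset.range (n + 1), |h (t' (i + 1)) - h (t' i)| :=
        Finset.sum_le_sum_of_subset_of_nonneg (by simp) fun _ _ _ => abs_nonneg _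
    _ ≤ totalVar h a b := le_csSup hbdd hmem

lemma eVariationOn_le_ofReal_totalVar {h : ℝ → ℝ} {a b : ℝ} (hbdd : BddAbove (vSums h a b)) :
    eVariationOn h (Ioc a b) ≤ ENNReal.ofReal (totalVar h a b) := by
  rw [eVariationOn.eVariationOn_eq_strictMonoOn]
  refine iSup_le fun ⟨n, t, ht, hts⟩ => ?_
  simp_rw [edist_dist, Real.dist_eq, ← ENNReal.ofReal_sum_of_nonneg fun _ _ => abs_nonneg _]
  exact ENNReal.ofReal_le_ofReal
    (sum_abs_le_totalVar hbdd ht (hts 0 (Nat.zero_le n)).1 (hts n self_mem_Iic).2)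

lemma sum_eVariationOn_le_biUnion {α E : Type*} [LinearOrder α] [PseudoEMetricSpace E]
    (f : α → E) {s : ℕ → Set α} (hs : ∀ m m', m < m' → ∀ x ∈ s m, ∀ y ∈ s m', x ≤ y) (n : ℕ) :
    ∑ m ∈ Finset.range n, eVariationOn f (s m) ≤ eVariationOn f (⋃ m ∈ Finset.range n, s m) := by
  induction n with
  | zero => simp
  | succ n ih =>
    rw [Finset.sum_range_succ, Finset.range_add_one, Finset.set_biUnion_insert, union_comm]
    refine (add_le_add_left ih _).trans (eVariationOn.add_le_union f ?_)
    simp only [mem_iUnion, Finset.mem_range]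
    rintro x ⟨m, hm, hx⟩ y hy
    exact hs m n hm x hx y hy

lemma edist_setAverage_le_eVariationOn {α : Type*} [LinearOrder α] [MeasurableSpace α]
    {μ : Measure α} {f : α → ℝ} {A : Set α} (h0 : μ A ≠ 0) (htop : μ A ≠ ⊤)
    (hf : IntegrableOn f A μ) {p : α} (hp : p ∈ A) :
    edist (⨍ z in A, f z ∂μ) (f p) ≤ eVariationOn f A := by
  obtain ⟨x, hx, hxle⟩ := exists_le_setAverage h0 htop hf
  obtain ⟨y, hy, hley⟩ := exists_setAverage_le h0 htop hf
  rcases le_total (f p) (⨍ z in A, f z ∂μ) with h | h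
  · refine le_trans ?_ (eVariationOn.edist_le f hy hp)
    rw [edist_dist, edist_dist, Real.dist_eq, Real.dist_eq]
    exact ENNReal.ofReal_le_ofReal (abs_le_abs (by linarith) (by linarith))
  · refine le_trans ?_ (eVariationOn.edist_le f hp hx)
    rw [edist_dist, edist_dist, Real.dist_eq, Real.dist_eq, abs_sub_comm]
    exact ENNReal.ofReal_le_ofReal (abs_le_abs (by linarith) (by linarith))

lemma ceil_div_mem_dyadCell (k : ℕ) (t : ℝ) : (⌈t * 2 ^ k⌉ : ℝ) / 2 ^ k ∈ dyadCell k t :=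
  ⟨by gcongr; exact sub_one_lt _, le_rfl⟩

lemma le_of_mem_dyadCell_of_ceil_lt {k : ℕ} {s t x y : ℝ} (hst : ⌈s * 2 ^ k⌉ < ⌈t * 2 ^ k⌉)
    (hx : x ∈ dyadCell k s) (hy : y ∈ dyadCell k t) : x ≤ y := by
  have : (⌈s * 2 ^ k⌉ : ℝ) ≤ ⌈t * 2 ^ k⌉ - 1 := by exact_mod_cast Int.le_sub_one_of_lt hst
  calc x ≤ ⌈s * 2 ^ k⌉ / 2 ^ k := hx.2
    _ ≤ (⌈t * 2 ^ k⌉ - 1) / 2 ^ k := by gcongr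
    _ ≤ y := hy.1.le

lemma dyadCell_subset_Ioc {k : ℕ} {a b : ℤ} {t : ℝ} (ht : t ∈ Ioc (a : ℝ) b) :
    dyadCell k t ⊆ Ioc (a : ℝ) b := by
  have h2 : (0 : ℝ) < 2 ^ k := by positivity
  have ha : a * 2 ^ k < ⌈t * 2 ^ k⌉ := by
    rw [Int.lt_ceil]; push_cast; exact mul_lt_mul_of_pos_right ht.1 h2
  have hb : ⌈t * 2 ^ k⌉ ≤ b * 2 ^ k := by
    rw [Int.ceil_le]; push_cast; exact mul_le_mul_of_nonneg_right ht.2 h2.le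
  have ha' : (a : ℝ) * 2 ^ k ≤ ⌈t * 2 ^ k⌉ - 1 := by exact_mod_cast Int.le_sub_one_of_lt ha
  have hb' : (⌈t * 2 ^ k⌉ : ℝ) ≤ b * 2 ^ k := by exact_mod_cast hb
  rintro x ⟨hx1, hx2⟩
  exact ⟨((le_div_iff₀ h2).2 ha').trans_lt hx1, hx2.trans ((div_le_iff₀ h2).2 hb')⟩

lemma condAvg_eq_setAverage (μ : Measure ℝ) (f : ℝ → ℝ) (k : ℕ) (t : ℝ) :
    condAvg μ f k t = ⨍ z in dyadCell k t, f z ∂μ := by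
  rw [setAverage_eq, smul_eq_mul, condAvg, div_eq_inv_mul, measureReal_def]

lemma edist_condAvg_le_eVariationOn (μ : Measure ℝ) [IsFiniteMeasure μ] {f : ℝ → ℝ}
    (hf : Integrable f μ) (k : ℕ) {t : ℝ} (h0 : μ (dyadCell k t) ≠ 0) :
    edist (condAvg μ f k t) (f (⌈t * 2 ^ k⌉ / 2 ^ k)) ≤ eVariationOn f (dyadCell k t) := by
  rw [condAvg_eq_setAverage]
  exact edist_setAverage_le_eVariationOn h0 (measure_ne_top μ _) hf.integrableOn
    (ceil_div_mem_dyadCell k t)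

lemma condAvg_congr (μ : Measure ℝ) (f : ℝ → ℝ) {k : ℕ} {s t : ℝ}
    (h : ⌈s * 2 ^ k⌉ = ⌈t * 2 ^ k⌉) : condAvg μ f k s = condAvg μ f k t := by
  simp only [condAvg, dyadCell, h]

lemma edist_condAvg_le (μ : Measure ℝ) [IsFiniteMeasure μ] {f : ℝ → ℝ}
    (hf : Integrable f μ) (k : ℕ) {s t : ℝ} (hs : μ (dyadCell k s) ≠ 0)
    (ht : μ (dyadCell k t) ≠ 0) :
    edist (condAvg μ f k t) (condAvg μ f k s) ≤
      eVariationOn f (dyadCell k t) + edist (f (⌈t * 2 ^ k⌉ / 2 ^ k)) (f (⌈s * 2 ^ k⌉ / 2 ^ k))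
        + eVariationOn f (dyadCell k s) := by
  refine (edist_triangle4 _ (f (⌈t * 2 ^ k⌉ / 2 ^ k)) (f (⌈s * 2 ^ k⌉ / 2 ^ k)) _).trans ?_
  rw [edist_comm _ (condAvg μ f k s)]
  gcongr
  · exact edist_condAvg_le_eVariationOn μ hf k ht
  · exact edist_condAvg_le_eVariationOn μ hf k hs

theorem eVariationOn_condAvg_le (μ : Measure ℝ) [IsFiniteMeasure μ] {f : ℝ → ℝ}
    (hf : Integrable f μ) (k : ℕ) {a b : ℝ} (hsub : ∀ t ∈ Ioc a b, dyadCell k t ⊆ Ioc a b)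
    (hpos : ∀ t ∈ Ioc a b, μ (dyadCell k t) ≠ 0) :
    eVariationOn (condAvg μ f k) (Ioc a b) ≤ 3 * eVariationOn f (Ioc a b) := by
  refine iSup_le fun ⟨n, u, hu, hus⟩ => ?_
  set j : ℕ → ℤ := fun m => ⌈u m * 2 ^ k⌉
  set p : ℕ → ℝ := fun m => (j m : ℝ) / 2 ^ k
  have hj : Monotone j := fun m m' h => Int.ceil_mono (by gcongr; exact hu h)
  have hp : Monotone p := fun m m' h =>
    div_le_div_of_nonneg_right (Int.cast_le.2 (hj h)) (by positivity)
  have hcell : ∀ m, dyadCell k (u m) ⊆ Ioc a b := fun m => hsub _ (hus m)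
  set B : ℕ → Set ℝ := fun m => {x ∈ dyadCell k (u m) | j m ≠ j (m + 1)}
  set B' : ℕ → Set ℝ := fun m => {x ∈ dyadCell k (u (m + 1)) | j m ≠ j (m + 1)}
  have hterm : ∀ m, edist (condAvg μ f k (u (m + 1))) (condAvg μ f k (u m)) ≤
      eVariationOn f (B' m) + edist (f (p (m + 1))) (f (p m)) + eVariationOn f (B m) := by
    intro m
    by_cases hjm : j m = j (m + 1)
    · rw [condAvg_congr μ f hjm.symm, edist_self]
      exact zero_le
    simpa only [B, B', hjm, ne_eq, not_false_eq_true, sep_true] using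
      edist_condAvg_le μ hf k (hpos _ (hus m)) (hpos _ (hus (m + 1)))
  have hB : ∀ m m', m < m' → ∀ x ∈ B m, ∀ y ∈ B m', x ≤ y := by
    rintro m m' hmm' x ⟨hx, h⟩ y ⟨hy, -⟩
    exact le_of_mem_dyadCell_of_ceil_lt (((hj m.le_succ).lt_of_ne h).trans_le (hj hmm')) hx hy
  have hB' : ∀ m m', m < m' → ∀ x ∈ B' m, ∀ y ∈ B' m', x ≤ y := by
    rintro m m' hmm' x ⟨hx, -⟩ y ⟨hy, h'⟩
    exact le_of_mem_dyadCell_of_ceil_lt ((hj hmm').trans_lt ((hj m'.le_succ).lt_of_ne h')) hx hy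
  calc ∑ m ∈ Finset.range n, edist (condAvg μ f k (u (m + 1))) (condAvg μ f k (u m))
      ≤ ∑ m ∈ Finset.range n,
          (eVariationOn f (B' m) + edist (f (p (m + 1))) (f (p m)) + eVariationOn f (B m)) :=
        Finset.sum_le_sum fun m _ => hterm m
    _ = ∑ m ∈ Finset.range n, eVariationOn f (B' m)
          + ∑ m ∈ Finset.range n, edist (f (p (m + 1))) (f (p m))
          + ∑ m ∈ Finset.range n, eVariationOn f (B m) := by
        rw [Finset.sum_add_distrib, Finset.sum_add_distrib]
    _ ≤ eVariationOn f (Ioc a b) + eVariationOn f (Ioc a b) + eVariationOn f (Ioc a b) := by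
        gcongr
        · exact (sum_eVariationOn_le_biUnion f hB' n).trans
            (eVariationOn.mono f (iUnion₂_subset fun m _ _ hx => hcell (m + 1) hx.1))
        · exact eVariationOn.sum_le hp fun m => hcell m (ceil_div_mem_dyadCell k (u m))
        · exact (sum_eVariationOn_le_biUnion f hB n).trans
            (eVariationOn.mono f (iUnion₂_subset fun m _ _ hx => hcell m hx.1))
    _ = 3 * eVariationOn f (Ioc a b) := by ring

theorem condAvg_var_le_three_mul_general
    (μ : Measure ℝ) [IsProbabilityMeasure μ]
    (f : ℝ → ℝ) (hInt : Integrable f μ)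
    (i k : ℕ)
    (hBV : BddAbove (vSums f (-(i : ℝ)) (i : ℝ)))
    (hcells : ∀ j : ℤ, dCell k j ⊆ Ioc (-(i : ℝ)) (i : ℝ) → 0 < μ (dCell k j)) :
    BddAbove (vSums (condAvg μ f k) (-(i : ℝ)) (i : ℝ)) ∧
      totalVar (condAvg μ f k) (-(i : ℝ)) (i : ℝ) ≤ 3 * totalVar f (-(i : ℝ)) (i : ℝ) := by
  have hsub : ∀ t ∈ Ioc (-(i : ℝ)) i, dyadCell k t ⊆ Ioc (-(i : ℝ)) i := fun t ht => by
    simpa using dyadCell_subset_Ioc (k := k) (a := -i) (b := i) (by simpa using ht)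
  have hvar := eVariationOn_condAvg_le μ hInt k hsub fun t ht => (hcells _ (hsub t ht)).ne'
  have hT := totalVar_nonneg f (-(i : ℝ)) i
  have hle : ∀ s ∈ vSums (condAvg μ f k) (-(i : ℝ)) i, s ≤ 3 * totalVar f (-(i : ℝ)) i := by
    intro s hs
    rw [← ENNReal.ofReal_le_ofReal_iff (by positivity), ENNReal.ofReal_mul (by norm_num),
      ENNReal.ofReal_ofNat]
    calc ENNReal.ofReal s ≤ eVariationOn (condAvg μ f k) (Ioc (-(i : ℝ)) i) :=
          ofReal_le_eVariationOn_of_mem_vSums hs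
      _ ≤ 3 * eVariationOn f (Ioc (-(i : ℝ)) i) := hvar
      _ ≤ 3 * ENNReal.ofReal (totalVar f (-(i : ℝ)) i) := by
          gcongr; exact eVariationOn_le_ofReal_totalVar hBV
  exact ⟨⟨_, hle⟩, Real.sSup_le hle (by positivity)⟩

/-- If `f` is `μ`-integrable with finite total variation on `(−i,i]`, `k ≥ 1`,
and every dyadic cell `A ∈ π_k` with `A ⊆ (−i,i]` has `μ(A) > 0`, then the
conditional averaging satisfies `V(f ∘ π_k : −i, i) ≤ 3·V(f : −i, i)`. -/
theorem condAvg_var_le_three_mul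
    (μ : Measure ℝ) [IsProbabilityMeasure μ]
    (f : ℝ → ℝ) (hInt : Integrable f μ)
    (i k : ℕ) (hi : 1 ≤ i) (hk : 1 ≤ k)
    (hBV : BddAbove (vSums f (-(i : ℝ)) (i : ℝ)))
    (hcells : ∀ j : ℤ, dCell k j ⊆ Ioc (-(i : ℝ)) (i : ℝ) → 0 < μ (dCell k j)) :
    BddAbove (vSums (condAvg μ f k) (-(i : ℝ)) (i : ℝ)) ∧
      totalVar (condAvg μ f k) (-(i : ℝ)) (i : ℝ) ≤ 3 * totalVar f (-(i : ℝ)) (i : ℝ) :=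
  condAvg_var_le_three_mul_general μ f hInt i k hBV hcells
end
end

section
/- Let μ be a Borel probability measure on ℝ, let T, K ≥ 1 be integers, let ε > 0, and let g : ℝ → ℝ have finite total variation V(g:−T,T) on (−T,T]. Suppose that for every cell A ∈ π_K with A ⊆ (−T,T] and μ(A) > 0 one has |∫_A g dμ| / μ(A) ≤ ε/2. Let ℋ = { A ∈ π_K : A ⊆ (−T,T], μ(A) > 0, and there exists t ∈ A with |g(t)| > ε }. Then (ε/2)·|ℋ| ≤ V(g:−T,T); in particular |ℋ| ≤ 2·V(g:−T,T)/ε. -/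
open MeasureTheory Filter Set

noncomputable section

/-- The set `ℋ` of (indices of) cells `A ∈ π_K` with `A ⊆ (−T,T]`, `μ(A) > 0`,
on which `|g|` exceeds `ε` somewhere. -/
def badCells (μ : Measure ℝ) (g : ℝ → ℝ) (K : ℕ) (T : ℕ) (ε : ℝ) : Set ℤ :=
  { j | dCell K j ⊆ Ioc (-(T : ℝ)) (T : ℝ) ∧ 0 < μ (dCell K j) ∧
        ∃ t ∈ dCell K j, ε < |g t| }

/-!
On a cell `A` where `|g|` exceeds `ε` at some point `t` but the `μ`-average of `g` is at most
`ε/2` in absolute value, `g` cannot stay within `ε/2` of `g t`; so the variation of `g` on `A`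
is at least `ε/2`. Dyadic cells are disjoint and ordered along the line, so the variations on
the bad cells add up to at most the variation of `g` on `(-T, T]`, which is bounded by
`V(g : -T, T)`. The same bound on the (measurable) monotone parts of `g` makes `g` integrable
on each cell, so that its average there is meaningful.
-/

section TotalVar

variable {g : ℝ → ℝ} {a b : ℝ}

lemma totalVar_nonneg_s15 (hab : a < b) (hBV : BddAbove (vSums g a b)) : 0 ≤ totalVar g a b :=
  le_csSup hBV ⟨0, fun _ => b, by simp, hab, rfl, by simp⟩

lemma sum_abs_sub_le_totalVar (hBV : BddAbove (vSums g a b)) {n : ℕ} {p : ℕ → ℝ}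
    (hp : StrictMonoOn p (Iic n)) (ha : a < p 0) (hb : p n ≤ b) :
    ∑ i ∈ Finset.range n, |g (p (i + 1)) - g (p i)| ≤ totalVar g a b := by
  have hstep : ∀ i < n, p i < p (i + 1) := fun i hi =>
    hp (mem_Iic.2 hi.le) (mem_Iic.2 hi) (Nat.lt_succ_self i)
  rcases hb.eq_or_lt with hb | hb
  · exact le_csSup hBV ⟨n, p, hstep, ha, hb, rfl⟩
  set q : ℕ → ℝ := fun i => if i ≤ n then p i else b with hq
  have hsum_q : ∑ i ∈ Finset.range (n + 1), |g (q (i + 1)) - g (q i)| =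
      ∑ i ∈ Finset.range n, |g (p (i + 1)) - g (p i)| + |g b - g (p n)| := by
    rw [Finset.sum_range_succ]
    congr 1
    · refine Finset.sum_congr rfl fun i hi => ?_
      have hi : i < n := Finset.mem_range.1 hi
      simp only [hq, if_pos hi.le, if_pos (Nat.succ_le_of_lt hi)]
    · simp [hq]
  have hq_mem : ∑ i ∈ Finset.range (n + 1), |g (q (i + 1)) - g (q i)| ∈ vSums g a b := by
    refine ⟨n + 1, q, fun i hi => ?_, by simpa [hq] using ha, by simp [hq], rfl⟩
    rcases (Nat.lt_succ_iff.1 hi).lt_or_eq with hi | rfl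
    · simpa [hq, hi.le, Nat.succ_le_of_lt hi] using hstep i hi
    · simpa [hq] using hb
  calc ∑ i ∈ Finset.range n, |g (p (i + 1)) - g (p i)|
      ≤ ∑ i ∈ Finset.range (n + 1), |g (q (i + 1)) - g (q i)| := by
        rw [hsum_q]; exact le_add_of_nonneg_right (abs_nonneg _)
    _ ≤ totalVar g a b := le_csSup hBV hq_mem

lemma eVariationOn_Ioc_le_totalVar (hBV : BddAbove (vSums g a b)) :
    eVariationOn g (Ioc a b) ≤ ENNReal.ofReal (totalVar g a b) := by
  rw [eVariationOn.eVariationOn_eq_strictMonoOn]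
  refine iSup_le fun ⟨n, u, hu, hu_mem⟩ => ?_
  have h0 := hu_mem 0 (mem_Iic.2 n.zero_le)
  have hn := hu_mem n (mem_Iic.2 le_rfl)
  calc ∑ i ∈ Finset.range n, edist (g (u (i + 1))) (g (u i))
      = ENNReal.ofReal (∑ i ∈ Finset.range n, |g (u (i + 1)) - g (u i)|) := by
        rw [ENNReal.ofReal_sum_of_nonneg fun i _ => abs_nonneg _]
        simp only [edist_dist, Real.dist_eq]
    _ ≤ ENNReal.ofReal (totalVar g a b) :=
        ENNReal.ofReal_le_ofReal (sum_abs_sub_le_totalVar hBV hu h0.1 hn.2)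

lemma boundedVariationOn_Ioc (hBV : BddAbove (vSums g a b)) : BoundedVariationOn g (Ioc a b) :=
  ne_top_of_le_ne_top ENNReal.ofReal_ne_top (eVariationOn_Ioc_le_totalVar hBV)

end TotalVar

theorem LocallyBoundedVariationOn.aemeasurable_restrict {β : Type*} [TopologicalSpace β]
    [MeasurableSpace β] [BorelSpace β] [LinearOrder β] [OrderClosedTopology β] {μ : Measure β}
    {f : β → ℝ} {s : Set β} (hf : LocallyBoundedVariationOn f s) (hs : MeasurableSet s) :
    AEMeasurable f (μ.restrict s) := by
  obtain ⟨p, q, hp, hq, rfl⟩ := hf.exists_monotoneOn_sub_monotoneOn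
  exact (aemeasurable_restrict_of_monotoneOn hs hp).sub (aemeasurable_restrict_of_monotoneOn hs hq)

theorem eVariationOn.sum_le_biUnion {α ι E : Type*} [LinearOrder α] [LinearOrder ι]
    [PseudoEMetricSpace E] (f : α → E) {s : ι → Set α}
    (hs : ∀ i j, i < j → ∀ x ∈ s i, ∀ y ∈ s j, x ≤ y) (S : Finset ι) :
    ∑ i ∈ S, eVariationOn f (s i) ≤ eVariationOn f (⋃ i ∈ S, s i) := by
  classical
  induction S using Finset.induction_on_max with
  | empty => simp
  | insert j S hlt ih =>
    have hj : j ∉ S := fun h => lt_irrefl j (hlt j h)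
    have hleft : ∀ x ∈ ⋃ i ∈ S, s i, ∀ y ∈ s j, x ≤ y := by
      intro x hx y hy
      obtain ⟨i, hi, hx⟩ := mem_iUnion₂.1 hx
      exact hs i j (hlt i hi) x hx y hy
    rw [Finset.sum_insert hj, Finset.set_biUnion_insert, union_comm, add_comm]
    exact (add_le_add_left ih _).trans (eVariationOn.add_le_union f hleft)

lemma exists_abs_sub_ge_of_abs_setIntegral_le {α : Type*} [MeasurableSpace α] {μ : Measure α}
    {A : Set α} {f : α → ℝ} (hA : MeasurableSet A) (hA0 : μ A ≠ 0) (hA_top : μ A ≠ ⊤)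
    (hf : AEStronglyMeasurable f (μ.restrict A)) {ε : ℝ}
    (havg : |∫ x in A, f x ∂μ| / μ.real A ≤ ε / 2) {t : α} (hft : ε < |f t|) :
    ∃ s ∈ A, ε / 2 ≤ |f t - f s| := by
  by_contra! hclose
  have hμ : 0 < μ.real A := ENNReal.toReal_pos hA0 hA_top
  have hf_int : IntegrableOn f A μ := by
    refine IntegrableOn.of_bound hA_top.lt_top hf (|f t| + ε / 2) ?_
    refine ae_restrict_of_forall_mem hA fun s hs => ?_
    have := abs_sub_abs_le_abs_sub (f s) (f t)
    rw [abs_sub_comm (f s)] at this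
    linarith [hclose s hs, Real.norm_eq_abs (f s)]
  have hdev : ‖∫ x in A, (f x - f t) ∂μ‖ ≤ ε / 2 * μ.real A :=
    norm_setIntegral_le_of_norm_le_const hA_top.lt_top fun s hs => by
      rw [Real.norm_eq_abs, abs_sub_comm]
      exact (hclose s hs).le
  rw [Real.norm_eq_abs] at hdev
  have hsplit : μ.real A * f t = ∫ x in A, f x ∂μ - ∫ x in A, (f x - f t) ∂μ := by
    rw [integral_sub hf_int (integrableOn_const hA_top), setIntegral_const, smul_eq_mul]
    ring
  have hmean : |∫ x in A, f x ∂μ| ≤ ε / 2 * μ.real A := (div_le_iff₀ hμ).1 havg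
  have hbound : μ.real A * |f t| ≤ ε * μ.real A := by
    rw [← abs_of_pos hμ, ← abs_mul, hsplit, abs_of_pos hμ]
    linarith [abs_sub _ _ |>.trans (add_le_add hmean hdev)]
  nlinarith

lemma dCell_le_of_lt {k : ℕ} {i j : ℤ} (hij : i < j) {x y : ℝ} (hx : x ∈ dCell k i)
    (hy : y ∈ dCell k j) : x ≤ y := by
  have hij' : (i : ℝ) ≤ j - 1 := by
    have : (i : ℝ) + 1 ≤ j := by exact_mod_cast hij
    linarith
  calc x ≤ i / 2 ^ k := hx.2
    _ ≤ (j - 1) / 2 ^ k := by gcongr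
    _ ≤ y := hy.1.le

section BadCells

variable {μ : Measure ℝ} [IsFiniteMeasure μ] {g : ℝ → ℝ} {K T : ℕ} {ε : ℝ}

lemma ofReal_half_le_eVariationOn_dCell (hg : AEMeasurable g (μ.restrict (Ioc (-(T : ℝ)) T)))
    (hsmall : ∀ j : ℤ, dCell K j ⊆ Ioc (-(T : ℝ)) (T : ℝ) → 0 < μ (dCell K j) →
      |∫ z in dCell K j, g z ∂μ| / (μ (dCell K j)).toReal ≤ ε / 2)
    {j : ℤ} (hj : j ∈ badCells μ g K T ε) :
    ENNReal.ofReal (ε / 2) ≤ eVariationOn g (dCell K j) := by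
  obtain ⟨hsub, hpos, t, ht, hgt⟩ := hj
  obtain ⟨s, hs, hts⟩ := exists_abs_sub_ge_of_abs_setIntegral_le measurableSet_Ioc hpos.ne'
    (measure_ne_top μ _) (hg.mono_set hsub).aestronglyMeasurable (hsmall j hsub hpos) hgt
  calc ENNReal.ofReal (ε / 2) ≤ ENNReal.ofReal |g t - g s| := ENNReal.ofReal_le_ofReal hts
    _ = edist (g t) (g s) := by rw [edist_dist, Real.dist_eq]
    _ ≤ eVariationOn g (dCell K j) := eVariationOn.edist_le g ht hs

lemma mul_card_le_totalVar (hT : 1 ≤ T)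
    (hBV : BddAbove (vSums g (-(T : ℝ)) (T : ℝ)))
    (hsmall : ∀ j : ℤ, dCell K j ⊆ Ioc (-(T : ℝ)) (T : ℝ) → 0 < μ (dCell K j) →
      |∫ z in dCell K j, g z ∂μ| / (μ (dCell K j)).toReal ≤ ε / 2)
    (S : Finset ℤ) (hS : ↑S ⊆ badCells μ g K T ε) :
    ε / 2 * S.card ≤ totalVar g (-(T : ℝ)) (T : ℝ) := by
  have hab : -(T : ℝ) < T := by
    have : (1 : ℝ) ≤ T := by exact_mod_cast hT
    linarith
  have hg : AEMeasurable g (μ.restrict (Ioc (-(T : ℝ)) T)) :=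
    (boundedVariationOn_Ioc hBV).locallyBoundedVariationOn.aemeasurable_restrict measurableSet_Ioc
  have hcells : (⋃ j ∈ S, dCell K j) ⊆ Ioc (-(T : ℝ)) T :=
    iUnion₂_subset fun j hj => (hS hj).1
  rw [← ENNReal.ofReal_le_ofReal_iff (totalVar_nonneg_s15 hab hBV), mul_comm,
    ENNReal.ofReal_mul (Nat.cast_nonneg _), ENNReal.ofReal_natCast, ← nsmul_eq_mul,
    ← Finset.sum_const]
  calc ∑ _j ∈ S, ENNReal.ofReal (ε / 2)
      ≤ ∑ j ∈ S, eVariationOn g (dCell K j) :=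
        Finset.sum_le_sum fun j hj => ofReal_half_le_eVariationOn_dCell hg hsmall (hS hj)
    _ ≤ eVariationOn g (⋃ j ∈ S, dCell K j) :=
        eVariationOn.sum_le_biUnion g (fun _ _ hij _ hx _ hy => dCell_le_of_lt hij hx hy) S
    _ ≤ eVariationOn g (Ioc (-(T : ℝ)) T) := eVariationOn.mono g hcells
    _ ≤ ENNReal.ofReal (totalVar g (-(T : ℝ)) T) := eVariationOn_Ioc_le_totalVar hBV

end BadCells

theorem badCells_card_le_general
    (μ : Measure ℝ) [IsProbabilityMeasure μ]
    (T K : ℕ) (hT : 1 ≤ T)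
    (ε : ℝ) (hε : 0 < ε)
    (g : ℝ → ℝ) (hBV : BddAbove (vSums g (-(T : ℝ)) (T : ℝ)))
    (hsmall : ∀ j : ℤ, dCell K j ⊆ Ioc (-(T : ℝ)) (T : ℝ) → 0 < μ (dCell K j) →
      |∫ z in dCell K j, g z ∂μ| / (μ (dCell K j)).toReal ≤ ε / 2) :
    (badCells μ g K T ε).Finite ∧
      ε / 2 * ((badCells μ g K T ε).ncard : ℝ) ≤ totalVar g (-(T : ℝ)) (T : ℝ) ∧
      ((badCells μ g K T ε).ncard : ℝ) ≤ 2 * totalVar g (-(T : ℝ)) (T : ℝ) / ε := by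
  have hcount := mul_card_le_totalVar hT hBV hsmall
  have hfin : (badCells μ g K T ε).Finite := by
    by_contra hinf
    set N := ⌈totalVar g (-(T : ℝ)) T / (ε / 2)⌉₊ + 1
    obtain ⟨S, hS, hcard⟩ := Set.Infinite.exists_subset_card_eq hinf N
    have hN : totalVar g (-(T : ℝ)) T < ε / 2 * N := by
      rw [← div_lt_iff₀' (by positivity)]
      exact (Nat.le_ceil _).trans_lt (by simp [N])
    exact (hcount S hS).not_gt (hcard ▸ hN)
  have hbound := hcount hfin.toFinset (by simp)
  rw [← Set.ncard_eq_toFinset_card _ hfin] at hbound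
  refine ⟨hfin, hbound, ?_⟩
  rw [le_div_iff₀ hε]
  linarith

/-- **Cell-counting lemma.** If `g` has finite total variation on `(−T,T]` and
`|∫_A g dμ| / μ(A) ≤ ε/2` on every positive-mass cell `A ∈ π_K` inside
`(−T,T]`, then the family `ℋ` of cells on which `|g|` exceeds `ε` somewhere
satisfies `(ε/2)·|ℋ| ≤ V(g:−T,T)`; in particular `|ℋ| ≤ 2·V(g:−T,T)/ε`. -/
theorem badCells_card_le
    (μ : Measure ℝ) [IsProbabilityMeasure μ]
    (T K : ℕ) (hT : 1 ≤ T) (hK : 1 ≤ K)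
    (ε : ℝ) (hε : 0 < ε)
    (g : ℝ → ℝ) (hBV : BddAbove (vSums g (-(T : ℝ)) (T : ℝ)))
    (hsmall : ∀ j : ℤ, dCell K j ⊆ Ioc (-(T : ℝ)) (T : ℝ) → 0 < μ (dCell K j) →
      |∫ z in dCell K j, g z ∂μ| / (μ (dCell K j)).toReal ≤ ε / 2) :
    (badCells μ g K T ε).Finite ∧
      ε / 2 * ((badCells μ g K T ε).ncard : ℝ) ≤ totalVar g (-(T : ℝ)) (T : ℝ) ∧
      ((badCells μ g K T ε).ncard : ℝ) ≤ 2 * totalVar g (-(T : ℝ)) (T : ℝ) / ε :=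
  badCells_card_le_general μ T K hT ε hε g hBV hsmall
end
end
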